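/- arXiv:1509.02981 — 4 statements merged into one kernel-verified Lean document; each statement's English description precedes it below -/
import Mathlib

section
/- Suppose P ∈ (0,1) and u : {0,1} × {0,1} × ℕ⁺ → ℝ satisfies: u is strictly increasing in its third argument for each fixed first two arguments, and u(1,1,m) > u(1,0,m) for all m. If Q' ∈ (1,Q) agents choose action 1 and the remaining Q - Q' choose action 0, and both inequalities P·u(1,1,Q') + (1-P)·u(1,0,Q') ≥ P·u(1,0,Q-Q'+1) + (1-P)·u(1,1,Q-Q'+1) and P·u(1,0,Q-Q') + (1-P)·u(1,1,Q-Q') ≥ P·u(1,1,Q'+1) + (1-P)·u(1,0,Q'+1) hold, then a contradiction follows. Hence in any equilibrium all agents in a community take the same action. -/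
/-- Proposition 1: if agents split between the two actions and each group weakly
prefers its own action, a contradiction follows, so equilibrium actions are unanimous. -/
theorem unanimous_actions
    (u : Fin 2 → Fin 2 → ℕ → ℝ)
    (hmono : ∀ θ a, StrictMono (u θ a))
    (hmatch : ∀ m, u 1 1 m > u 1 0 m)
    (P : ℝ) (hP0 : 0 < P) (hP1 : P < 1)
    (Q Q' : ℕ) (hQ'1 : 1 < Q') (hQ'Q : Q' < Q)
    (ineq1 : P * u 1 1 Q' + (1 - P) * u 1 0 Q' ≥
      P * u 1 0 (Q - Q' + 1) + (1 - P) * u 1 1 (Q - Q' + 1))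
    (ineq2 : P * u 1 0 (Q - Q') + (1 - P) * u 1 1 (Q - Q') ≥
      P * u 1 1 (Q' + 1) + (1 - P) * u 1 0 (Q' + 1)) :
    False := by
  have hP1' : 0 < 1 - P := by linarith
  have h1 : u 1 1 Q' < u 1 1 (Q' + 1) := hmono 1 1 (Nat.lt_succ_self _)
  have h2 : u 1 0 Q' < u 1 0 (Q' + 1) := hmono 1 0 (Nat.lt_succ_self _)
  have h3 : u 1 0 (Q - Q') < u 1 0 (Q - Q' + 1) := hmono 1 0 (Nat.lt_succ_self _)
  have h4 : u 1 1 (Q - Q') < u 1 1 (Q - Q' + 1) := hmono 1 1 (Nat.lt_succ_self _)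
  nlinarith [mul_lt_mul_of_pos_left h1 hP0, mul_lt_mul_of_pos_left h2 hP1',
    mul_lt_mul_of_pos_left h3 hP0, mul_lt_mul_of_pos_left h4 hP1']
end

section
/- Let u be such that u(1,1,m) > u(1,0,m) for all m and u is increasing in m, and let P > 1/2 be the posterior of state 1. Suppose Q₁ agents choose action 1 and Q − Q₁ choose action 0 in a community of size Q, and equilibrium requires: (i) P·u(1,1,Q₁) + (1−P)·u(1,0,Q₁) ≥ (1−P)·u(1,1,Q−Q₁+1) + P·u(1,0,Q−Q₁+1) and (ii) (1−P)·u(1,1,Q−Q₁) + P·u(1,0,Q−Q₁) ≥ P·u(1,1,Q₁+1) + (1−P)·u(1,0,Q₁+1). Then Q₁ ≥ Q/2. -/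
/-- Proposition 6 (separation motives): with congestion (`u` decreasing in `m`) and
posterior `P > 1/2` on state 1, in any equilibrium split at least half of the agents
take the more informed action 1. -/
theorem separation_motives_majority
    (u : Fin 2 → Fin 2 → ℕ → ℝ)
    (hanti : ∀ θ a, StrictAnti (u θ a))
    (hmatch : ∀ m, u 1 1 m > u 1 0 m)
    (P : ℝ) (hP : (1:ℝ)/2 < P) (hP1 : P < 1)
    (Q Q₁ : ℕ) (hQ : 0 < Q) (hQ₁ : Q₁ ≤ Q)
    (ineq1 : P * u 1 1 Q₁ + (1 - P) * u 1 0 Q₁ ≥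
      (1 - P) * u 1 1 (Q - Q₁ + 1) + P * u 1 0 (Q - Q₁ + 1))
    (ineq2 : (1 - P) * u 1 1 (Q - Q₁) + P * u 1 0 (Q - Q₁) ≥
      P * u 1 1 (Q₁ + 1) + (1 - P) * u 1 0 (Q₁ + 1)) :
    Q ≤ 2 * Q₁ := by
  by_contra h
  push_neg at h
  have hn : Q₁ + 1 ≤ Q - Q₁ := by omega
  have hA := (hanti 1 1).antitone hn
  have hB := (hanti 1 0).antitone hn
  have hm := hmatch (Q - Q₁)
  nlinarith [hA, hB, hm, ineq2, hP, hP1]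
end

section
/- Let u(1,1,Q) > u(1,0,Q), c > 0, and let f₀, f₁ be positive densities with strictly increasing likelihood ratio and symmetric structure f₀(s) = f₁(−s). Suppose c > lim_{s→1} [f₀(s)/(f₀(s)+f₁(s))]·(u(1,1,Q) − u(1,0,Q)) (cost exceeds the value of perfect information at the strongest signal). Then there exists a unique s(c) ∈ (0,1) with f₁(s(c))/(f₀(s(c))+f₁(s(c)))·u(1,1,Q) + f₀(s(c))/(f₀(s(c))+f₁(s(c)))·u(1,0,Q) = u(1,1,Q) − c, and the expected payoff from following the signal strictly exceeds u(1,1,Q) − c exactly on s ∈ (s(c), 1). -/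
/-!
The expected payoff from following the signal is `u(1,1,Q) - p(s) (u(1,1,Q) - u(1,0,Q))`,
where `p(s) = f₀(s)/(f₀(s)+f₁(s))` is the posterior probability of state 0. The monotone likelihood
ratio makes `p` continuous and strictly decreasing; by symmetry `p(0) = 1/2`, and `p(s) → L` as
`s → 1`. The two bounds on `c` place the threshold `c / (u(1,1,Q) - u(1,0,Q))` strictly between
`L` and `1/2`, so the intermediate value theorem gives a crossing `s(c) ∈ (0,1)`, unique and
separating the signals by strict monotonicity.
-/

open Set Filter Topology

lemma div_mul_add_div_mul_eq_sub_mul {x y : ℝ} (hxy : x + y ≠ 0) (a b : ℝ) :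
    y / (x + y) * a + x / (x + y) * b = a - x / (x + y) * (a - b) := by
  field_simp
  ring

lemma strictAntiOn_div_add_of_strictMonoOn_div {S : Set ℝ} {f₀ f₁ : ℝ → ℝ}
    (hpos₀ : ∀ s ∈ S, 0 < f₀ s) (hpos₁ : ∀ s ∈ S, 0 < f₁ s)
    (hratio : StrictMonoOn (fun s => f₁ s / f₀ s) S) :
    StrictAntiOn (fun s => f₀ s / (f₀ s + f₁ s)) S := by
  intro a ha b hb hab
  have hr := hratio ha hb hab
  have := hpos₀ a ha; have := hpos₁ a ha; have := hpos₀ b hb; have := hpos₁ b hb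
  simp only at hr ⊢
  rw [div_lt_div_iff₀ (by positivity) (by positivity)] at hr ⊢
  nlinarith

lemma exists_mem_Ioo_eq_of_tendsto_nhdsWithin {g : ℝ → ℝ} {a b x₀ k L : ℝ}
    (hg : ContinuousOn g (Ioo a b)) (hx₀ : x₀ ∈ Ioo a b) (hk : k < g x₀)
    (hL : Tendsto g (𝓝[Ioo a b] b) (𝓝 L)) (hLk : L < k) :
    ∃ x ∈ Ioo x₀ b, g x = k := by
  have : (𝓝[Ioo a b] b).NeBot := right_nhdsWithin_Ioo_neBot (hx₀.1.trans hx₀.2)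
  have hright : ∀ᶠ x in 𝓝[Ioo a b] b, x₀ < x :=
    nhdsWithin_le_nhds (Ioi_mem_nhds hx₀.2)
  obtain ⟨x₁, hgx₁, hx₀x₁, hx₁⟩ :=
    ((hL.eventually (eventually_lt_nhds hLk)).and (hright.and self_mem_nhdsWithin)).exists
  have hsub : Icc x₀ x₁ ⊆ Ioo a b := Icc_subset_Ioo hx₀.1 hx₁.2
  obtain ⟨x, hx, hgx⟩ := intermediate_value_Ioo' hx₀x₁.le (hg.mono hsub) ⟨hgx₁, hk⟩
  exact ⟨x, ⟨hx.1, hx.2.trans hx₁.2⟩, hgx⟩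

theorem observation_cutoff_bounded_general
    (f₀ f₁ : ℝ → ℝ)
    (hc₀ : ContinuousOn f₀ (Ioo (-1:ℝ) 1)) (hc₁ : ContinuousOn f₁ (Ioo (-1:ℝ) 1))
    (hpos₀ : ∀ s ∈ Ioo (-1:ℝ) 1, 0 < f₀ s) (hpos₁ : ∀ s ∈ Ioo (-1:ℝ) 1, 0 < f₁ s)
    (hsymm : ∀ s ∈ Ioo (-1:ℝ) 1, f₀ s = f₁ (-s))
    (hmlrp : StrictMonoOn (fun s => f₁ s / f₀ s) (Ioo (-1:ℝ) 1))
    (u11Q u10Q c L : ℝ) (hu : u10Q < u11Q)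
    (hL : Tendsto (fun s => f₀ s / (f₀ s + f₁ s))
      (nhdsWithin 1 (Ioo (-1:ℝ) 1)) (nhds L))
    (hcbig : c > L * (u11Q - u10Q))
    (hcsmall : c < (u11Q - u10Q) / 2) :
    ∃ sc ∈ Ioo (0:ℝ) 1,
      (f₁ sc / (f₀ sc + f₁ sc) * u11Q + f₀ sc / (f₀ sc + f₁ sc) * u10Q = u11Q - c) ∧
      (∀ s' ∈ Ioo (0:ℝ) 1,
        f₁ s' / (f₀ s' + f₁ s') * u11Q + f₀ s' / (f₀ s' + f₁ s') * u10Q = u11Q - c →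
        s' = sc) ∧
      (∀ s ∈ Ioo (-1:ℝ) 1,
        (f₁ s / (f₀ s + f₁ s) * u11Q + f₀ s / (f₀ s + f₁ s) * u10Q > u11Q - c ↔
          sc < s)) := by
  set p : ℝ → ℝ := fun s => f₀ s / (f₀ s + f₁ s) with hp
  have hΔ : 0 < u11Q - u10Q := sub_pos.2 hu
  have hsum : ∀ s ∈ Ioo (-1:ℝ) 1, f₀ s + f₁ s ≠ 0 :=
    fun s hs => (add_pos (hpos₀ s hs) (hpos₁ s hs)).ne'
  have hanti : StrictAntiOn p (Ioo (-1) 1) :=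
    strictAntiOn_div_add_of_strictMonoOn_div hpos₀ hpos₁ hmlrp
  have h0 : (0:ℝ) ∈ Ioo (-1) 1 := by norm_num
  have hp0 : p 0 = 1 / 2 := by
    have := hpos₁ 0 h0
    simp only [hp, hsymm 0 h0, neg_zero]
    field_simp
    norm_num
  have hk : c / (u11Q - u10Q) < p 0 := by rw [hp0, div_lt_iff₀ hΔ]; linarith
  have hLk : L < c / (u11Q - u10Q) := by rw [lt_div_iff₀ hΔ]; linarith
  have hcont : ContinuousOn p (Ioo (-1) 1) := hc₀.div (hc₀.add hc₁) hsum
  obtain ⟨sc, hsc, hpsc⟩ := exists_mem_Ioo_eq_of_tendsto_nhdsWithin hcont h0 hk hL hLk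
  have hsub : Ioo (0:ℝ) 1 ⊆ Ioo (-1) 1 := Ioo_subset_Ioo_left (by norm_num)
  have hscI := hsub hsc
  have hgap : ∀ s ∈ Ioo (-1:ℝ) 1,
      f₁ s / (f₀ s + f₁ s) * u11Q + f₀ s / (f₀ s + f₁ s) * u10Q - (u11Q - c) =
        (p sc - p s) * (u11Q - u10Q) := by
    intro s hs
    rw [div_mul_add_div_mul_eq_sub_mul (hsum s hs), hpsc, sub_mul, div_mul_cancel₀ c hΔ.ne']
    ring
  refine ⟨sc, hsc, ?_, fun s' hs' heq => ?_, fun s hs => ?_⟩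
  · rw [← sub_eq_zero, hgap sc hscI, sub_self, zero_mul]
  · have := hgap s' (hsub hs')
    rw [heq, sub_self, zero_eq_mul, sub_eq_zero] at this
    exact hanti.injOn (hsub hs') hscI (this.resolve_right hΔ.ne').symm
  · rw [gt_iff_lt, ← sub_pos, hgap s hs, mul_pos_iff_of_pos_right hΔ, sub_pos]
    exact hanti.lt_iff_gt hs hscI

/-- Bounded-beliefs observation cutoff: if the cost `c` exceeds the value of perfect
information at the strongest signal but is below half the payoff gap, there is a
unique cutoff `s(c) ∈ (0,1)` where the signal-following payoff equals `u(1,1,Q) - c`,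
and the signal-following payoff exceeds `u(1,1,Q) - c` exactly on `(s(c), 1)`. -/
theorem observation_cutoff_bounded
    (f₀ f₁ : ℝ → ℝ)
    (hc₀ : ContinuousOn f₀ (Ioo (-1:ℝ) 1)) (hc₁ : ContinuousOn f₁ (Ioo (-1:ℝ) 1))
    (hpos₀ : ∀ s ∈ Ioo (-1:ℝ) 1, 0 < f₀ s) (hpos₁ : ∀ s ∈ Ioo (-1:ℝ) 1, 0 < f₁ s)
    (hsymm : ∀ s ∈ Ioo (-1:ℝ) 1, f₀ s = f₁ (-s))
    (hmlrp : StrictMonoOn (fun s => f₁ s / f₀ s) (Ioo (-1:ℝ) 1))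
    (u11Q u10Q c L : ℝ) (hu : u10Q < u11Q) (hc : 0 < c)
    (hL : Tendsto (fun s => f₀ s / (f₀ s + f₁ s))
      (nhdsWithin 1 (Ioo (-1:ℝ) 1)) (nhds L))
    (hcbig : c > L * (u11Q - u10Q))
    (hcsmall : c < (u11Q - u10Q) / 2) :
    ∃ sc ∈ Ioo (0:ℝ) 1,
      (f₁ sc / (f₀ sc + f₁ sc) * u11Q + f₀ sc / (f₀ sc + f₁ sc) * u10Q = u11Q - c) ∧
      (∀ s' ∈ Ioo (0:ℝ) 1,
        f₁ s' / (f₀ s' + f₁ s') * u11Q + f₀ s' / (f₀ s' + f₁ s') * u10Q = u11Q - c →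
        s' = sc) ∧
      (∀ s ∈ Ioo (-1:ℝ) 1,
        (f₁ s / (f₀ s + f₁ s) * u11Q + f₀ s / (f₀ s + f₁ s) * u10Q > u11Q - c ↔
          sc < s)) :=
  observation_cutoff_bounded_general f₀ f₁ hc₀ hc₁ hpos₀ hpos₁ hsymm hmlrp u11Q u10Q c L hu hL hcbig
    hcsmall
end

section
/- Let w ∈ (0,1), ρ > 0, π > 0 and N ∈ ℕ. If δ < π·w^N·ρ/2, then the pair of inequalities D > π·w^N·ρ/2 and D < δ (for the same real number D) is contradictory. More substantively: suppose disjoint events {(h, 0^N) : h ∈ H} and {(h', 1^N) : h' ∈ H'} satisfy, for positive weights g₀, g₁ with g₀ + g₁ = 1: (a) g₀·P(h,0^N|0) − g₁·P(h,0^N|1) ≥ π·g₁·w^N·P(h|1) for each h ∈ H; (b) g₁·P(h',1^N|1) − g₀·P(h',1^N|0) ≥ π·g₀·w^N·P(h'|0) for each h' ∈ H'; (c) P(h|1)·g₁ ≥ P(h|0)·g₀ for h ∈ H and P(h'|0)·g₀ ≥ P(h'|1)·g₁ for h' ∈ H'; (d) g₀·Σ_H P(h|0) + g₁·Σ_{H'}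 P(h'|1) > ρ/2. Then Σ_H [g₀·P(h,0^N|0) − g₁·P(h,0^N|1)] + Σ_{H'} [g₁·P(h',1^N|1) − g₀·P(h',1^N|0)] > π·w^N·ρ/2. -/
/-- Quantitative core of Lemma 4 (truth-telling observation): the improvement in the
matching probability from the reversal strategy is bounded below by `π·w^N·ρ/2`,
which contradicts the convergence bound `D < δ` when `δ < π·w^N·ρ/2`. -/
theorem reversal_improvement_bound
    {H H' : Type*} [Fintype H] [Fintype H']
    (Ph0 Ph1 PH0 PH1 : H → ℝ) (Ph'0 Ph'1 PH'0 PH'1 : H' → ℝ)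
    (g₀ g₁ w ρ π : ℝ) (N : ℕ)
    (hg₀ : 0 < g₀) (hg₁ : 0 < g₁) (hgsum : g₀ + g₁ = 1)
    (hw0 : 0 < w) (hw1 : w < 1) (hρ : 0 < ρ) (hπ : 0 < π)
    (hPnn : ∀ h, 0 ≤ Ph0 h) (hPnn1 : ∀ h, 0 ≤ Ph1 h)
    (hP'nn : ∀ h', 0 ≤ Ph'0 h') (hP'nn1 : ∀ h', 0 ≤ Ph'1 h')
    (ha : ∀ h, g₀ * PH0 h - g₁ * PH1 h ≥ π * g₁ * w ^ N * Ph1 h)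
    (hb : ∀ h', g₁ * PH'1 h' - g₀ * PH'0 h' ≥ π * g₀ * w ^ N * Ph'0 h')
    (hc1 : ∀ h, Ph1 h * g₁ ≥ Ph0 h * g₀)
    (hc2 : ∀ h', Ph'0 h' * g₀ ≥ Ph'1 h' * g₁)
    (hd : g₀ * ∑ h, Ph0 h + g₁ * ∑ h', Ph'1 h' > ρ / 2) :
    ((∑ h, (g₀ * PH0 h - g₁ * PH1 h)) + ∑ h', (g₁ * PH'1 h' - g₀ * PH'0 h')
      > π * w ^ N * ρ / 2) ∧
    (∀ δ D : ℝ, δ < π * w ^ N * ρ / 2 → π * w ^ N * ρ / 2 < D → D < δ → False) := by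
  have hwN : 0 < w ^ N := pow_pos hw0 N
  have hpw : 0 < π * w ^ N := by positivity
  have key1 : (∑ h, (g₀ * PH0 h - g₁ * PH1 h)) ≥ π * w ^ N * (g₀ * ∑ h, Ph0 h) := by
    have : π * w ^ N * (g₀ * ∑ h, Ph0 h) = ∑ h, π * w ^ N * (g₀ * Ph0 h) := by
      rw [Finset.mul_sum, Finset.mul_sum]
    rw [this]
    apply Finset.sum_le_sum
    intro h _
    have h1 := ha h
    have h2 : g₀ * Ph0 h ≤ g₁ * Ph1 h := by
      have := hc1 h; nlinarith
    nlinarith [hc1 h]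
  have key2 : (∑ h', (g₁ * PH'1 h' - g₀ * PH'0 h')) ≥ π * w ^ N * (g₁ * ∑ h', Ph'1 h') := by
    have : π * w ^ N * (g₁ * ∑ h', Ph'1 h') = ∑ h', π * w ^ N * (g₁ * Ph'1 h') := by
      rw [Finset.mul_sum, Finset.mul_sum]
    rw [this]
    apply Finset.sum_le_sum
    intro h' _
    have h1 := hb h'
    nlinarith [hc2 h']
  constructor
  · have : π * w ^ N * (g₀ * ∑ h, Ph0 h + g₁ * ∑ h', Ph'1 h') > π * w ^ N * (ρ / 2) :=
      mul_lt_mul_of_pos_left hd hpw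
    nlinarith
  · intro δ D h1 h2 h3; linarith
end
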